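/- arXiv:2007.02510 — 4 statements merged into one kernel-verified Lean document; each statement's English description precedes it below -/
import Mathlib

section
/- Let f : ℝ → ℝ be a continuously differentiable probability density function supported in (0,∞) with ∫_0^∞ (1/x) f(x) dx < ∞, let F(q) = ∫_0^q f(x) dx, and for r, s > 0 define a(q) = F(q) + q · ∫_q^∞ (1/x) f(x) dx − r q / s. Then a is twice differentiable on (0,∞) and for every q > 0 the second derivative satisfies a″(q) = −f(q)/q ≤ 0. -/
open MeasureTheory Set Filter Topology

/-! Writing `G(q) = ∫_q^∞ f(x)/x dx`, the fundamental theorem of calculus gives `F' = f` and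
`G' = -f(q)/q`, so `a'(q) = f(q) + G(q) - q · f(q)/q - r/s = G(q) - r/s` on `(0,∞)`: the two
boundary terms cancel. Differentiating once more, `a''(q) = G'(q) = -f(q)/q ≤ 0`. -/

theorem hasDerivAt_setIntegral_Ioi {g : ℝ → ℝ} {a q : ℝ} (hg : IntegrableOn g (Ioi a))
    (haq : a < q) (hcont : ContinuousAt g q) :
    HasDerivAt (fun t => ∫ x in Ioi t, g x) (-g q) q := by
  have hsplit : ∀ t ∈ Ioi a, ∫ x in Ioi t, g x = (∫ x in Ioi a, g x) - ∫ x in a..t, g x :=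
    fun t ht => by rw [← intervalIntegral.integral_Ioi_sub_Ioi hg (le_of_lt ht), sub_sub_cancel]
  have hint : IntervalIntegrable g volume a q :=
    (intervalIntegrable_iff_integrableOn_Ioc_of_le haq.le).2 (hg.mono_set Ioc_subset_Ioi_self)
  have hmeas : StronglyMeasurableAtFilter g (𝓝 q) :=
    ⟨Ioi a, Ioi_mem_nhds haq, hg.aestronglyMeasurable⟩
  refine ((intervalIntegral.integral_hasDerivAt_right hint hmeas hcont).const_sub
    (∫ x in Ioi a, g x)).congr_of_eventuallyEq ?_
  filter_upwards [Ioi_mem_nhds haq] with t ht using hsplit t ht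

section Allocation

variable {f : ℝ → ℝ} (hf : Continuous f)
  (hmoment : IntegrableOn (fun x => 1 / x * f x) (Ioi 0))
include hf hmoment

theorem hasDerivAt_tailMoment {q : ℝ} (hq : 0 < q) :
    HasDerivAt (fun t => ∫ x in Ioi t, 1 / x * f x) (-(f q / q)) q := by
  have hcont : ContinuousAt (fun x => 1 / x * f x) q :=
    (continuousAt_const.div continuousAt_id hq.ne').mul hf.continuousAt
  convert hasDerivAt_setIntegral_Ioi hmoment hq hcont using 1
  ring

theorem hasDerivAt_allocation (r s : ℝ) {q : ℝ} (hq : 0 < q) :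
    HasDerivAt
      (fun q : ℝ => (∫ x in (0:ℝ)..q, f x) + q * (∫ x in Ioi q, 1 / x * f x) - r * q / s)
      ((∫ x in Ioi q, 1 / x * f x) - r / s) q := by
  have hF : HasDerivAt (fun q : ℝ => ∫ x in (0:ℝ)..q, f x) (f q) q :=
    hf.integral_hasStrictDerivAt 0 q |>.hasDerivAt
  have hqG := (hasDerivAt_id' q).mul (hasDerivAt_tailMoment hf hmoment hq)
  have hlin : HasDerivAt (fun q : ℝ => r * q / s) (r / s) q := by
    simpa using ((hasDerivAt_id q).const_mul r).div_const s
  refine ((hF.add hqG).sub hlin).congr_deriv ?_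
  field_simp
  ring

end Allocation

theorem allocation_second_deriv_general
    (f : ℝ → ℝ) (hf_smooth : ContDiff ℝ 1 f) (hf_nonneg : ∀ x, 0 ≤ f x)
    (hmoment : IntegrableOn (fun x => (1 / x) * f x) (Ioi 0))
    (r s : ℝ) :
    ∀ q > 0,
      DifferentiableAt ℝ
        (fun q : ℝ =>
          (∫ x in (0:ℝ)..q, f x) + q * (∫ x in Ioi q, (1 / x) * f x) - r * q / s) q ∧
      HasDerivAt
        (deriv (fun q : ℝ =>
          (∫ x in (0:ℝ)..q, f x) + q * (∫ x in Ioi q, (1 / x) * f x) - r * q / s))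
        (-(f q / q)) q ∧
      -(f q / q) ≤ 0 := by
  have hf := hf_smooth.continuous
  intro q hq
  refine ⟨(hasDerivAt_allocation hf hmoment r s hq).differentiableAt, ?_, ?_⟩
  · have hderiv : deriv (fun q : ℝ =>
          (∫ x in (0:ℝ)..q, f x) + q * (∫ x in Ioi q, 1 / x * f x) - r * q / s)
        =ᶠ[𝓝 q] fun t => (∫ x in Ioi t, 1 / x * f x) - r / s := by
      filter_upwards [Ioi_mem_nhds hq] with t ht
      exact (hasDerivAt_allocation hf hmoment r s ht).deriv
    exact ((hasDerivAt_tailMoment hf hmoment hq).sub_const _).congr_of_eventuallyEq hderiv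
  · exact neg_nonpos.2 (div_nonneg (hf_nonneg q) hq.le)

/-- For a continuously differentiable density `f` supported in `(0,∞)`, the allocation
function `a(q) = F(q) + q ∫_q^∞ (1/x) f(x) dx − r q / s` is twice differentiable on
`(0,∞)` and its second derivative satisfies `a″(q) = −f(q)/q ≤ 0`. -/
theorem allocation_second_deriv
    (f : ℝ → ℝ) (hf_smooth : ContDiff ℝ 1 f) (hf_nonneg : ∀ x, 0 ≤ f x)
    (hf_supp : ∀ x ≤ 0, f x = 0)
    (hf_int : ∫ x, f x = 1)
    (hmoment : IntegrableOn (fun x => (1 / x) * f x) (Ioi 0))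
    (r s : ℝ) (hr : 0 < r) (hs : 0 < s) :
    ∀ q > 0,
      DifferentiableAt ℝ
        (fun q : ℝ =>
          (∫ x in (0:ℝ)..q, f x) + q * (∫ x in Ioi q, (1 / x) * f x) - r * q / s) q ∧
      HasDerivAt
        (deriv (fun q : ℝ =>
          (∫ x in (0:ℝ)..q, f x) + q * (∫ x in Ioi q, (1 / x) * f x) - r * q / s))
        (-(f q / q)) q ∧
      -(f q / q) ≤ 0 :=
  allocation_second_deriv_general f hf_smooth hf_nonneg hmoment r s
end

section
/- Let f : ℝ → ℝ be a continuous probability density function supported in (0,∞) with ∫_0^∞ (1/x) f(x) dx < ∞, let F(q) = ∫_0^q f(x) dx, and for r, s > 0 define a(q) = F(q) + q · ∫_q^∞ (1/x) f(x) dx − r q / s. Then a is concave on the interval (0,∞). -/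
/-!
For `q ≥ 0` the two integral terms combine into a single one,
`F(q) + q ∫_q^∞ f(x)/x dx = ∫_0^∞ min(1, q/x) f(x) dx`,
and for each `x > 0` the integrand is a nonnegative multiple of the minimum of two affine
functions of `q`, hence concave. An integral of concave functions is concave, and subtracting
the linear term `r q / s` preserves concavity.
-/

open MeasureTheory Set

theorem ConcaveOn.integral {α E : Type*} [MeasurableSpace α] {μ : Measure α}
    [AddCommGroup E] [Module ℝ E] {s : Set E} {φ : E → α → ℝ}
    (hs : Convex ℝ s) (hφ : ∀ᵐ x ∂μ, ConcaveOn ℝ s (φ · x))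
    (hint : ∀ q ∈ s, Integrable (φ q) μ) :
    ConcaveOn ℝ s (fun q => ∫ x, φ q x ∂μ) := by
  refine ⟨hs, fun p hp q hq a b ha hb hab => ?_⟩
  have hcomb : Integrable (fun x => a * φ p x + b * φ q x) μ :=
    ((hint p hp).const_mul a).add ((hint q hq).const_mul b)
  simp only [smul_eq_mul]
  rw [← integral_const_mul, ← integral_const_mul,
    ← integral_add ((hint p hp).const_mul a) ((hint q hq).const_mul b)]
  refine integral_mono_ae hcomb (hint _ (hs hp hq ha hb hab)) ?_
  filter_upwards [hφ] with x hx
  exact hx.2 hp hq ha hb hab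

theorem concaveOn_min_one_div_mul {x c : ℝ} (hx : 0 ≤ x) (hc : 0 ≤ c) :
    ConcaveOn ℝ univ (fun q => min 1 (q / x) * c) := by
  have hlin : ConcaveOn ℝ univ fun q : ℝ => x⁻¹ • q :=
    (concaveOn_id convex_univ).smul (inv_nonneg.2 hx)
  refine (((concaveOn_const (1 : ℝ) convex_univ).inf hlin).smul hc).congr fun q _ => ?_
  simp [div_eq_inv_mul, mul_comm]

theorem integrableOn_min_one_div_mul {f : ℝ → ℝ} {q : ℝ} (hq : 0 ≤ q)
    (hf : IntegrableOn f (Ioc 0 q)) (hmoment : IntegrableOn (fun x => 1 / x * f x) (Ioi q)) :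
    IntegrableOn (fun x => min 1 (q / x) * f x) (Ioi 0) := by
  rw [← Ioc_union_Ioi_eq_Ioi hq]
  refine IntegrableOn.union ?_ ?_
  · refine hf.congr_fun (fun x hx => ?_) measurableSet_Ioc
    rw [min_eq_left ((one_le_div hx.1).2 hx.2), one_mul]
  · refine IntegrableOn.congr_fun (hmoment.const_mul q) (fun x hx => ?_) measurableSet_Ioi
    rw [min_eq_right ((div_le_one (hq.trans_lt hx)).2 hx.le)]
    ring

theorem setIntegral_min_one_div_mul {f : ℝ → ℝ} {q : ℝ} (hq : 0 ≤ q)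
    (hf : IntegrableOn f (Ioc 0 q)) (hmoment : IntegrableOn (fun x => 1 / x * f x) (Ioi q)) :
    ∫ x in Ioi 0, min 1 (q / x) * f x =
      (∫ x in (0 : ℝ)..q, f x) + q * ∫ x in Ioi q, 1 / x * f x := by
  have hint := integrableOn_min_one_div_mul hq hf hmoment
  rw [← Ioc_union_Ioi_eq_Ioi hq] at hint ⊢
  rw [setIntegral_union (Ioc_disjoint_Ioi le_rfl) measurableSet_Ioi
      (hint.mono_set subset_union_left) (hint.mono_set subset_union_right),
    intervalIntegral.integral_of_le hq, ← integral_const_mul]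
  congr 1
  · refine setIntegral_congr_fun measurableSet_Ioc fun x hx => ?_
    rw [min_eq_left ((one_le_div hx.1).2 hx.2), one_mul]
  · refine setIntegral_congr_fun measurableSet_Ioi fun x hx => ?_
    rw [min_eq_right ((div_le_one (hq.trans_lt hx)).2 hx.le)]
    ring

theorem allocation_concave_general
    (f : ℝ → ℝ) (hf_cont : Continuous f) (hf_nonneg : ∀ x, 0 ≤ f x)
    (hmoment : IntegrableOn (fun x => (1 / x) * f x) (Ioi 0))
    (r s : ℝ) :
    ConcaveOn ℝ (Ioi 0)
      (fun q : ℝ =>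
        (∫ x in (0:ℝ)..q, f x) + q * (∫ x in Ioi q, (1 / x) * f x) - r * q / s) := by
  have hf (q : ℝ) : IntegrableOn f (Ioc 0 q) := hf_cont.integrableOn_Ioc
  have hmoment_tail {q : ℝ} (hq : 0 ≤ q) : IntegrableOn (fun x => 1 / x * f x) (Ioi q) :=
    hmoment.mono_set (Ioi_subset_Ioi hq)
  have hconc : ConcaveOn ℝ (Ioi 0) fun q => ∫ x in Ioi 0, min 1 (q / x) * f x :=
    ConcaveOn.integral (convex_Ioi 0)
      ((ae_restrict_mem measurableSet_Ioi).mono fun x hx =>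
        (concaveOn_min_one_div_mul (le_of_lt hx) (hf_nonneg x)).subset (subset_univ _)
          (convex_Ioi 0))
      fun q hq => integrableOn_min_one_div_mul (le_of_lt hq) (hf q) (hmoment_tail (le_of_lt hq))
  have hlin : ConvexOn ℝ (Ioi 0) ⇑((r / s) • (LinearMap.id : ℝ →ₗ[ℝ] ℝ)) :=
    LinearMap.convexOn _ (convex_Ioi 0)
  refine (hconc.sub hlin).congr fun q hq => ?_
  simp only [Pi.sub_apply, LinearMap.smul_apply, LinearMap.id_apply, smul_eq_mul,
    setIntegral_min_one_div_mul (le_of_lt hq) (hf q) (hmoment_tail (le_of_lt hq))]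
  ring

/-- The allocation function `a(q) = F(q) + q ∫_q^∞ (1/x) f(x) dx − r q / s` is
concave on the interval `(0,∞)`. -/
theorem allocation_concave
    (f : ℝ → ℝ) (hf_cont : Continuous f) (hf_nonneg : ∀ x, 0 ≤ f x)
    (hf_supp : ∀ x ≤ 0, f x = 0)
    (hf_int : ∫ x, f x = 1)
    (hmoment : IntegrableOn (fun x => (1 / x) * f x) (Ioi 0))
    (r s : ℝ) (hr : 0 < r) (hs : 0 < s) :
    ConcaveOn ℝ (Ioi 0)
      (fun q : ℝ =>
        (∫ x in (0:ℝ)..q, f x) + q * (∫ x in Ioi q, (1 / x) * f x) - r * q / s) :=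
  allocation_concave_general f hf_cont hf_nonneg hmoment r s
end

section
/- Let f : ℝ → ℝ be a continuous probability density function supported in (0,∞) with ∫_0^∞ (1/x) f(x) dx < ∞, let F(q) = ∫_0^q f(x) dx, and for r, s > 0 define a(q) = F(q) + q · ∫_q^∞ (1/x) f(x) dx − r q / s. If q* > 0 satisfies ∫_{q*}^∞ (1/x) f(x) dx = r/s, then q* is a global maximizer of a on (0,∞), i.e., a(q) ≤ a(q*) for every q > 0. -/
open MeasureTheory Set

lemma split_Ioi (g : ℝ → ℝ) (a b : ℝ) (hab : a ≤ b) (hg : IntegrableOn g (Ioi a)) :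
    (∫ x in Ioi a, g x) = (∫ x in Ioc a b, g x) + ∫ x in Ioi b, g x := by
  rw [← Ioc_union_Ioi_eq_Ioi hab]
  exact setIntegral_union (Ioc_disjoint_Ioi le_rfl) measurableSet_Ioi
    (hg.mono_set (by rw [← Ioc_union_Ioi_eq_Ioi hab]; exact subset_union_left))
    (hg.mono_set (by rw [← Ioc_union_Ioi_eq_Ioi hab]; exact subset_union_right))

/-- If `q* > 0` satisfies the first-order condition `∫_{q*}^∞ (1/x) f(x) dx = r/s`,
then `q*` is a global maximizer of the allocation function
`a(q) = F(q) + q ∫_q^∞ (1/x) f(x) dx − r q / s` on `(0,∞)`. -/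
theorem allocation_global_maximizer
    (f : ℝ → ℝ) (hf_cont : Continuous f) (hf_nonneg : ∀ x, 0 ≤ f x)
    (hf_supp : ∀ x ≤ 0, f x = 0)
    (hf_int : ∫ x, f x = 1)
    (hmoment : IntegrableOn (fun x => (1 / x) * f x) (Ioi 0))
    (r s : ℝ) (hr : 0 < r) (hs : 0 < s)
    (qstar : ℝ) (hqstar : 0 < qstar)
    (hfoc : (∫ x in Ioi qstar, (1 / x) * f x) = r / s) :
    ∀ q > 0,
      (∫ x in (0:ℝ)..q, f x) + q * (∫ x in Ioi q, (1 / x) * f x) - r * q / s ≤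
        (∫ x in (0:ℝ)..qstar, f x) + qstar * (∫ x in Ioi qstar, (1 / x) * f x)
          - r * qstar / s := by
  intro q hq
  set g : ℝ → ℝ := fun x => (1 / x) * f x with hg
  have hgint : ∀ a : ℝ, 0 < a → IntegrableOn g (Ioi a) :=
    fun a ha => hmoment.mono_set (Ioi_subset_Ioi ha.le)
  have hgii : IntervalIntegrable g volume qstar q := by
    refine (hmoment.mono_set ?_).intervalIntegrable
    intro x hx
    have : min qstar q ≤ x := hx.1
    exact lt_of_lt_of_le (lt_min hqstar hq) this
  have key : ∀ a b : ℝ, 0 < a → 0 < b →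
      (∫ x in Ioi a, g x) - (∫ x in Ioi b, g x) = ∫ x in a..b, g x := by
    intro a b ha hb
    rcases le_total a b with h | h
    · rw [split_Ioi g a b h (hgint a ha), intervalIntegral.integral_of_le h]
      ring
    · rw [split_Ioi g b a h (hgint b hb), intervalIntegral.integral_of_ge h]
      ring
  have hfF : (∫ x in (0:ℝ)..q, f x) - (∫ x in (0:ℝ)..qstar, f x) = ∫ x in qstar..q, f x := by
    rw [← intervalIntegral.integral_add_adjacent_intervals (a := 0) (b := qstar) (c := q)
      (hf_cont.intervalIntegrable _ _) (hf_cont.intervalIntegrable _ _)]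
    ring
  have hGdiff := key qstar q hqstar hq
  rw [hfoc]
  have hcomb : (∫ x in qstar..q, f x) - q * (∫ x in qstar..q, g x)
      = ∫ x in qstar..q, (f x - q * g x) := by
    rw [intervalIntegral.integral_sub (hf_cont.intervalIntegrable _ _) (hgii.const_mul q),
      intervalIntegral.integral_const_mul]
  -- pointwise sign
  have hpt : ∀ x, 0 < x → f x - q * g x = f x * ((x - q) / x) := by
    intro x hx
    simp only [hg]
    field_simp
  have hmain : (∫ x in qstar..q, (f x - q * g x)) ≤ 0 := by
    rcases le_total qstar q with h | h
    · have h1 : (0:ℝ) ≤ ∫ x in qstar..q, (q * g x - f x) := by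
        apply intervalIntegral.integral_nonneg h
        intro x hx
        have hx0 : 0 < x := lt_of_lt_of_le hqstar hx.1
        have he : q * g x - f x = f x * ((q - x) / x) := by
          simp only [hg]; field_simp
        rw [he]
        exact mul_nonneg (hf_nonneg x) (div_nonneg (by linarith [hx.2]) hx0.le)
      have h2 : (∫ x in qstar..q, (f x - q * g x)) = - ∫ x in qstar..q, (q * g x - f x) := by
        rw [← intervalIntegral.integral_neg]
        congr 1; funext x; ring
      linarith
    · rw [intervalIntegral.integral_symm q qstar]
      simp only [neg_nonpos]
      apply intervalIntegral.integral_nonneg h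
      intro x hx
      have hx0 : 0 < x := lt_of_lt_of_le hq hx.1
      rw [hpt x hx0]
      have : 0 ≤ (x - q) / x := div_nonneg (by linarith [hx.1]) hx0.le
      exact mul_nonneg (hf_nonneg x) this
  have : (∫ x in (0:ℝ)..q, f x) + q * (∫ x in Ioi q, g x) - r * q / s -
      ((∫ x in (0:ℝ)..qstar, f x) + qstar * (r / s) - r * qstar / s)
      = (∫ x in qstar..q, f x) - q * ∫ x in qstar..q, g x := by
    rw [← hfF, ← hGdiff, hfoc]
    ring
  linarith [hmain, hcomb, this]
end

section
/- Let f : ℝ → ℝ be a continuous probability density function with f(x) > 0 for all x > 0 and f = 0 on (−∞, 0], satisfying ∫_0^∞ (1/x) f(x) dx < ∞, let F(q) = ∫_0^q f(x) dx, and for r, s > 0 with r/s < ∫_0^∞ (1/x) f(x) dx define a(q) = F(q) + q · ∫_q^∞ (1/x) f(x) dx − r q / s. Then a has a unique global maximizer on (0,∞), namely the unique q* > 0 with ∫_{q*}^∞ (1/x) f(x) dx = r/s; in particular a(q) < a(q*) for every q > 0 with q ≠ q*. -/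
open MeasureTheory Set Filter Topology

/-!
The tail `T(q) = ∫_q^∞ f(x)/x dx` is continuous and strictly decreasing on `[0,∞)`, from
`T(0) > r/s` down to `0`, so it takes the value `r/s` at exactly one point `q*`. In
`a'(q) = f(q) + T(q) - q · f(q)/q - r/s` the density terms cancel, leaving
`a'(q) = T(q) - r/s`: positive before `q*` and negative after it.
-/

namespace MeasureTheory.IntegrableOn

variable {g : ℝ → ℝ} {a : ℝ}

theorem intervalIntegrable_of_le (hg : IntegrableOn g (Ioi a)) {p q : ℝ} (hap : a ≤ p)
    (hpq : p ≤ q) : IntervalIntegrable g volume p q :=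
  (intervalIntegrable_iff_integrableOn_Ioc_of_le hpq).2
    (hg.mono_set (Ioc_subset_Ioi_self.trans (Ioi_subset_Ioi hap)))

theorem integral_Ioi_eq_sub_intervalIntegral (hg : IntegrableOn g (Ioi a)) {u : ℝ}
    (hu : a ≤ u) :
    ∫ x in Ioi u, g x = (∫ x in Ioi a, g x) - ∫ x in a..u, g x := by
  rw [← intervalIntegral.integral_Ioi_sub_Ioi hg hu, sub_sub_cancel]

theorem continuousOn_integral_Ioi (hg : IntegrableOn g (Ioi a)) (b : ℝ) :
    ContinuousOn (fun u => ∫ x in Ioi u, g x) (Icc a b) := by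
  rcases le_or_gt a b with hab | hba
  · have hprim : ContinuousOn (fun u => ∫ x in a..u, g x) (Icc a b) := by
      simpa [uIcc_of_le hab] using intervalIntegral.continuousOn_primitive_interval'
        (hg.intervalIntegrable_of_le le_rfl hab) left_mem_uIcc
    exact (continuousOn_const.sub hprim).congr fun u hu =>
      hg.integral_Ioi_eq_sub_intervalIntegral hu.1
  · simp [Icc_eq_empty_of_lt hba]

theorem hasDerivAt_integral_Ioi (hg : IntegrableOn g (Ioi a)) {q : ℝ} (hq : a < q)
    (hgq : ContinuousAt g q) : HasDerivAt (fun u => ∫ x in Ioi u, g x) (-g q) q := by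
  have hmeas : StronglyMeasurableAtFilter g (𝓝 q) :=
    AEStronglyMeasurable.stronglyMeasurableAtFilter_of_mem hg.aestronglyMeasurable
      (Ioi_mem_nhds hq)
  have hprim := (intervalIntegral.integral_hasDerivAt_right
    (hg.intervalIntegrable_of_le le_rfl hq.le) hmeas hgq).const_sub (∫ x in Ioi a, g x)
  refine hprim.congr_of_eventuallyEq ?_
  filter_upwards [Ioi_mem_nhds hq] with u hu
  exact hg.integral_Ioi_eq_sub_intervalIntegral (le_of_lt hu)

theorem strictAntiOn_integral_Ioi (hg : IntegrableOn g (Ioi a)) (hpos : ∀ x > a, 0 < g x) :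
    StrictAntiOn (fun u => ∫ x in Ioi u, g x) (Ici a) := by
  intro p hp q hq hpq
  have hmiddle : 0 < ∫ x in p..q, g x :=
    intervalIntegral.intervalIntegral_pos_of_pos_on (hg.intervalIntegrable_of_le hp hpq.le)
      (fun x hx => hpos x (hp.trans_lt hx.1)) hpq
  have hsplit := intervalIntegral.integral_Ioi_sub_Ioi (hg.mono_set (Ioi_subset_Ioi hp)) hpq.le
  dsimp only
  linarith

theorem exists_integral_Ioi_eq (hg : IntegrableOn g (Ioi a)) {c : ℝ} (hc : 0 < c)
    (hca : c < ∫ x in Ioi a, g x) : ∃ q, a < q ∧ ∫ x in Ioi q, g x = c := by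
  obtain ⟨t, htc, hat⟩ : ∃ t, (∫ x in Ioi t, g x) < c ∧ a ≤ t :=
    (((tendsto_integral_Ioi_zero tendsto_id).eventually (gt_mem_nhds hc)).and
      (eventually_ge_atTop a)).exists
  obtain ⟨q, hq, hqc⟩ : c ∈ (fun u => ∫ x in Ioi u, g x) '' Icc a t :=
    intermediate_value_Icc' hat (hg.continuousOn_integral_Ioi t) ⟨htc.le, hca.le⟩
  refine ⟨q, lt_of_le_of_ne hq.1 ?_, hqc⟩
  rintro rfl
  exact hca.ne' hqc

end MeasureTheory.IntegrableOn

theorem lt_of_hasDerivAt_of_strictAntiOn {A A' : ℝ → ℝ} {a q₀ : ℝ}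
    (hA : ∀ q > a, HasDerivAt A (A' q) q) (hA' : StrictAntiOn A' (Ioi a)) (hq₀ : a < q₀)
    (hzero : A' q₀ = 0) {q : ℝ} (hq : a < q) (hne : q ≠ q₀) : A q < A q₀ := by
  have hcont : ContinuousOn A (Ioi a) := fun x hx => (hA x hx).continuousAt.continuousWithinAt
  rcases hne.lt_or_gt with hlt | hgt
  · have hmono : StrictMonoOn A (Ioc a q₀) := by
      refine strictMonoOn_of_deriv_pos (convex_Ioc a q₀) (hcont.mono Ioc_subset_Ioi_self) ?_
      intro x hx
      rw [interior_Ioc] at hx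
      rw [(hA x hx.1).deriv, ← hzero]
      exact hA' hx.1 hq₀ hx.2
    exact hmono ⟨hq, hlt.le⟩ ⟨hq₀, le_rfl⟩ hlt
  · have hanti : StrictAntiOn A (Ici q₀) := by
      refine strictAntiOn_of_deriv_neg (convex_Ici q₀)
        (hcont.mono (Ici_subset_Ioi.2 hq₀)) ?_
      intro x hx
      rw [interior_Ici] at hx
      rw [(hA x (hq₀.trans hx)).deriv, ← hzero]
      exact hA' hq₀ (hq₀.trans hx) hx
    exact hanti self_mem_Ici hgt.le hgt

theorem hasDerivAt_integral_add_mul_integral_Ioi {f : ℝ → ℝ} (hf : Continuous f)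
    (hmoment : IntegrableOn (fun x => (1 / x) * f x) (Ioi 0)) {q : ℝ} (hq : 0 < q) :
    HasDerivAt (fun u => (∫ x in (0:ℝ)..u, f x) + u * ∫ x in Ioi u, (1 / x) * f x)
      (∫ x in Ioi q, (1 / x) * f x) q := by
  have hF : HasDerivAt (fun u => ∫ x in (0:ℝ)..u, f x) (f q) q :=
    hf.integral_hasStrictDerivAt 0 q |>.hasDerivAt
  have hT := hmoment.hasDerivAt_integral_Ioi hq
    ((continuousAt_const.div continuousAt_id hq.ne').mul hf.continuousAt)
  refine (hF.add ((hasDerivAt_id' q).mul hT)).congr_deriv ?_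
  field_simp
  ring

theorem allocation_unique_global_maximizer_general
    (f : ℝ → ℝ) (hf_cont : Continuous f) (hf_pos : ∀ x > 0, 0 < f x)
    (hmoment : IntegrableOn (fun x => (1 / x) * f x) (Ioi 0))
    (r s : ℝ) (hr : 0 < r) (hs : 0 < s)
    (hrs : r / s < ∫ x in Ioi (0:ℝ), (1 / x) * f x) :
    ∃! qstar : ℝ, 0 < qstar ∧ (∫ x in Ioi qstar, (1 / x) * f x) = r / s ∧
      ∀ q : ℝ, 0 < q → q ≠ qstar →
        (∫ x in (0:ℝ)..q, f x) + q * (∫ x in Ioi q, (1 / x) * f x) - r * q / s <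
          (∫ x in (0:ℝ)..qstar, f x) + qstar * (∫ x in Ioi qstar, (1 / x) * f x)
            - r * qstar / s := by
  have hanti := hmoment.strictAntiOn_integral_Ioi fun x hx => mul_pos (by positivity) (hf_pos x hx)
  obtain ⟨qstar, hqstar, htail⟩ := hmoment.exists_integral_Ioi_eq (div_pos hr hs) hrs
  refine ⟨qstar, ⟨hqstar, htail, fun q hq hne => ?_⟩, fun y ⟨hy, hy_tail, _⟩ =>
    hanti.injOn hy.le hqstar.le (hy_tail.trans htail.symm)⟩
  refine lt_of_hasDerivAt_of_strictAntiOn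
    (A := fun q => (∫ x in (0:ℝ)..q, f x) + q * (∫ x in Ioi q, (1 / x) * f x) - r * q / s)
    (A' := fun q => (∫ x in Ioi q, (1 / x) * f x) - r / s) (fun q hq => ?_)
    (fun p hp q hq hpq => sub_lt_sub_right (hanti (mem_Ici_of_Ioi hp) (mem_Ici_of_Ioi hq) hpq) _)
    hqstar (sub_eq_zero.2 htail) hq hne
  refine ((hasDerivAt_integral_add_mul_integral_Ioi hf_cont hmoment hq).sub
    (((hasDerivAt_id' q).const_mul r).div_const s)).congr_deriv ?_
  rw [mul_one]

/-- Full strength of the paper's Theorem 1: if `r/s < ∫_0^∞ (1/x) f(x) dx`, the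
allocation function `a(q) = F(q) + q ∫_q^∞ (1/x) f(x) dx − r q / s` has a unique
global maximizer on `(0,∞)`, namely the unique `q* > 0` with
`∫_{q*}^∞ (1/x) f(x) dx = r/s`; in particular `a(q) < a(q*)` for `q ≠ q*`. -/
theorem allocation_unique_global_maximizer
    (f : ℝ → ℝ) (hf_cont : Continuous f) (hf_pos : ∀ x > 0, 0 < f x)
    (hf_supp : ∀ x ≤ 0, f x = 0)
    (hf_int : ∫ x, f x = 1)
    (hmoment : IntegrableOn (fun x => (1 / x) * f x) (Ioi 0))
    (r s : ℝ) (hr : 0 < r) (hs : 0 < s)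
    (hrs : r / s < ∫ x in Ioi (0:ℝ), (1 / x) * f x) :
    ∃! qstar : ℝ, 0 < qstar ∧ (∫ x in Ioi qstar, (1 / x) * f x) = r / s ∧
      ∀ q : ℝ, 0 < q → q ≠ qstar →
        (∫ x in (0:ℝ)..q, f x) + q * (∫ x in Ioi q, (1 / x) * f x) - r * q / s <
          (∫ x in (0:ℝ)..qstar, f x) + qstar * (∫ x in Ioi qstar, (1 / x) * f x)
            - r * qstar / s :=
  allocation_unique_global_maximizer_general f hf_cont hf_pos hmoment r s hr hs hrs
end
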